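/- arXiv:1511.01233 — 2 statements merged into one kernel-verified Lean document; each statement's English description precedes it below -/
import Mathlib

section
/- Let a, b > 1 and c ≥ 0 with log a ≥ 2 and li(b) = li(a) + c. Then log b ≥ log a + c · (log a)/a − c² · (log a) · (log a − 1) / a². -/
/-!
Write `φ = log ∘ li⁻¹` and `x = li⁻¹ t`. Since `dx/dt = log x`, one has `φ' = log x / x` and
`φ'' = -log x (log x - 1) / x²`. The map `θ ↦ θ (θ - 1) e^{-2θ}` decreases on `[2, ∞)`, so on
`[li a, li b]` the second derivative is at least its value at `li a`, and Taylor's formula with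
this bound on `φ''` gives the claim, even with `c² / 2` in place of `c²`. All derivatives are
taken in the variable `x`, so `li⁻¹` never has to be constructed.
-/

noncomputable def li (t : ℝ) : ℝ := ∫ τ in (2:ℝ)..t, 1 / Real.log τ

open Real Set

theorem monotoneOn_Icc_of_hasDerivAt_nonneg {f f' : ℝ → ℝ} {a b : ℝ}
    (hf : ∀ x ∈ Icc a b, HasDerivAt f (f' x) x) (hf' : ∀ x ∈ Ioo a b, 0 ≤ f' x) :
    MonotoneOn f (Icc a b) :=
  monotoneOn_of_hasDerivWithinAt_nonneg (convex_Icc a b)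
    (fun x hx ↦ (hf x hx).continuousAt.continuousWithinAt)
    (fun x hx ↦ (hf x (interior_subset hx)).hasDerivWithinAt)
    (fun x hx ↦ hf' x (by rwa [interior_Icc] at hx))

/-- Taylor's lower bound `φ(g b) ≥ φ(g a) + φ'(g a) Δ - M Δ² / 2` for `f = φ ∘ g`, expressed
through `q = φ' ∘ g` and `φ'' ∘ g = q' / g' ≥ -M`, so that `φ` itself never appears. -/
theorem taylor_lower_bound_of_hasDerivAt {f g g' q q' : ℝ → ℝ} {a b M : ℝ} (hab : a ≤ b)
    (hg : ∀ x ∈ Icc a b, HasDerivAt g (g' x) x)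
    (hf : ∀ x ∈ Icc a b, HasDerivAt f (q x * g' x) x)
    (hq : ∀ x ∈ Icc a b, HasDerivAt q (q' x) x)
    (hg' : ∀ x ∈ Ioo a b, 0 ≤ g' x) (hq' : ∀ x ∈ Ioo a b, -(M * g' x) ≤ q' x) :
    f a + q a * (g b - g a) - M / 2 * (g b - g a) ^ 2 ≤ f b := by
  have hq_ge : ∀ x ∈ Icc a b, q a - M * (g x - g a) ≤ q x := by
    have hmono : MonotoneOn (fun x ↦ q x + M * g x) (Icc a b) :=
      monotoneOn_Icc_of_hasDerivAt_nonneg (fun x hx ↦ (hq x hx).add ((hg x hx).const_mul M))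
        (fun x hx ↦ by linarith [hq' x hx])
    intro x hx
    have := hmono (left_mem_Icc.2 hab) hx hx.1
    simp only at this
    linarith
  have hH : MonotoneOn (fun x ↦ f x - q a * g x + M / 2 * (g x - g a) ^ 2) (Icc a b) := by
    refine monotoneOn_Icc_of_hasDerivAt_nonneg
      (f' := fun x ↦ g' x * (q x - q a + M * (g x - g a))) (fun x hx ↦ ?_) (fun x hx ↦ ?_)
    · refine (((hf x hx).fun_sub ((hg x hx).const_mul (q a))).fun_add
        ((((hg x hx).sub_const (g a)).fun_pow 2).const_mul (M / 2))).congr_deriv ?_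
      push_cast; ring
    · exact mul_nonneg (hg' x hx) (by linarith [hq_ge x (Ioo_subset_Icc_self hx)])
  have := hH (left_mem_Icc.2 hab) (right_mem_Icc.2 hab) hab
  simp only [sub_self] at this
  linarith

theorem antitoneOn_mul_sub_one_mul_exp :
    AntitoneOn (fun θ : ℝ ↦ θ * (θ - 1) * exp (-(2 * θ))) (Ici 2) := by
  refine antitoneOn_of_hasDerivWithinAt_nonpos (convex_Ici 2)
    (f' := fun θ ↦ -(2 * θ * (θ - 2) + 1) * exp (-(2 * θ))) (by fun_prop) (fun θ _ ↦ ?_)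
    (fun θ hθ ↦ ?_)
  · have := (((hasDerivAt_id θ).fun_mul ((hasDerivAt_id θ).sub_const 1)).fun_mul
      (((hasDerivAt_id θ).const_mul 2).fun_neg.exp))
    refine (this.congr_deriv ?_).hasDerivWithinAt
    simp only [id]; ring
  · rw [interior_Ici] at hθ
    have : (2:ℝ) < θ := hθ
    have : 0 ≤ 2 * θ * (θ - 2) + 1 := by nlinarith
    exact mul_nonpos_of_nonpos_of_nonneg (by linarith) (exp_pos _).le

theorem antitoneOn_log_mul_log_sub_one_div_sq :
    AntitoneOn (fun s ↦ log s * (log s - 1) / s ^ 2) (Ici (exp 2)) := by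
  intro s hs t ht hst
  have hs0 : 0 < s := (exp_pos 2).trans_le hs
  have ht0 : 0 < t := (exp_pos 2).trans_le ht
  have key := antitoneOn_mul_sub_one_mul_exp (le_log_iff_exp_le hs0 |>.2 hs)
    (le_log_iff_exp_le ht0 |>.2 ht) (log_le_log hs0 hst)
  have hexp : ∀ x, 0 < x →
      log x * (log x - 1) * exp (-(2 * log x)) = log x * (log x - 1) / x ^ 2 := by
    intro x hx
    rw [exp_neg, mul_comm 2, exp_mul, exp_log hx, div_eq_mul_inv]
    norm_cast
  simpa only [hexp s hs0, hexp t ht0] using key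

theorem continuousOn_one_div_log : ContinuousOn (fun τ : ℝ ↦ 1 / log τ) (Ioi 1) :=
  continuousOn_const.div (continuousOn_log.mono fun _ hx ↦ (zero_lt_one.trans hx).ne')
    fun _ hx ↦ (log_pos hx).ne'

theorem intervalIntegrable_one_div_log {x y : ℝ} (hx : 1 < x) (hy : 1 < y) :
    IntervalIntegrable (fun τ ↦ 1 / log τ) MeasureTheory.volume x y :=
  (continuousOn_one_div_log.mono fun _ hτ ↦ (lt_min hx hy).trans_le hτ.1).intervalIntegrable

theorem hasDerivAt_li {x : ℝ} (hx : 1 < x) : HasDerivAt li (1 / log x) x :=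
  intervalIntegral.integral_hasDerivAt_right (intervalIntegrable_one_div_log one_lt_two hx)
    (continuousOn_one_div_log.stronglyMeasurableAtFilter isOpen_Ioi x hx)
    (continuousOn_one_div_log.continuousAt (Ioi_mem_nhds hx))

theorem strictMonoOn_li : StrictMonoOn li (Ioi 1) :=
  strictMonoOn_of_hasDerivWithinAt_pos (convex_Ioi 1)
    (fun _ hx ↦ (hasDerivAt_li hx).continuousAt.continuousWithinAt)
    (fun _ hx ↦ (hasDerivAt_li (interior_subset hx)).hasDerivWithinAt)
    (fun _ hx ↦ one_div_pos.2 (log_pos (interior_subset hx)))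

theorem hasDerivAt_log_div_self {x : ℝ} (hx : x ≠ 0) :
    HasDerivAt (fun x ↦ log x / x) ((1 - log x) / x ^ 2) x :=
  ((hasDerivAt_log hx).fun_div (hasDerivAt_id x) hx).congr_deriv (by simp only [id]; field_simp)

/-- Second-order Taylor lower bound for `log ∘ li⁻¹`: if `li b = li a + c` with
`log a ≥ 2`, then `log b ≥ log a + c (log a)/a − c² (log a)(log a − 1)/a²`. -/
theorem log_inverse_li_taylor_lower_bound
    (a b c : ℝ) (ha : 1 < a) (hb : 1 < b) (hc : 0 ≤ c)
    (hloga : 2 ≤ Real.log a)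
    (hli : li b = li a + c) :
    Real.log a + c * Real.log a / a
      - c ^ 2 * Real.log a * (Real.log a - 1) / a ^ 2 ≤ Real.log b := by
  have hab : a ≤ b := strictMonoOn_li.le_iff_le ha hb |>.1 (by linarith)
  have hgt : ∀ x ∈ Icc a b, 1 < x := fun x hx ↦ ha.trans_le hx.1
  have hlog_deriv : ∀ x ∈ Icc a b, HasDerivAt log (log x / x * (1 / log x)) x := fun x hx ↦
    (hasDerivAt_log (by linarith [hgt x hx])).congr_deriv
      (by field_simp [(log_pos (hgt x hx)).ne'])
  have hsecond : ∀ x ∈ Ioo a b,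
      -(log a * (log a - 1) / a ^ 2 * (1 / log x)) ≤ (1 - log x) / x ^ 2 := by
    intro x hx
    have hlogx := log_pos (hgt x (Ioo_subset_Icc_self hx))
    have hexp_le := (le_log_iff_exp_le (by linarith)).1 hloga
    have hdecay : log x * (log x - 1) / x ^ 2 ≤ log a * (log a - 1) / a ^ 2 :=
      antitoneOn_log_mul_log_sub_one_div_sq hexp_le (hexp_le.trans hx.1.le) hx.1.le
    calc -(log a * (log a - 1) / a ^ 2 * (1 / log x))
        ≤ -(log x * (log x - 1) / x ^ 2 * (1 / log x)) := by gcongr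
      _ = (1 - log x) / x ^ 2 := by field_simp; ring
  have hbound := taylor_lower_bound_of_hasDerivAt hab (fun x hx ↦ hasDerivAt_li (hgt x hx))
    hlog_deriv (fun x hx ↦ hasDerivAt_log_div_self (by linarith [hgt x hx]))
    (fun x hx ↦ (one_div_pos.2 (log_pos (hgt x (Ioo_subset_Icc_self hx)))).le) hsecond
  have hM : 0 ≤ c ^ 2 * (log a * (log a - 1) / a ^ 2) := by
    have : 0 ≤ log a * (log a - 1) := by nlinarith
    positivity
  rw [hli, add_sub_cancel_left] at hbound
  linear_combination hbound + hM / 2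
end

section
/- Let C > 0, D ∈ ℝ, N ∈ ℕ with N ≥ 1, and let x : ℝ → ℝ be continuous on [0, N] with x t ≥ e and li(x t) = C·t + D for every t ∈ [0, N]. Then ∏_{k=1}^{N} (1 − 1/(x k)) ≤ (log(x 1) / log(x N))^{1/C}. -/
open Real Finset

lemma Set.uIcc_subset_Ioi {α : Type*} [LinearOrder α] {a b c : α} (ha : c < a) (hb : c < b) : Set.uIcc a b ⊆ Set.Ioi c :=
  fun _ hs => (lt_min ha hb).trans_le hs.1

lemma continuousOn_one_div_log_s11 : ContinuousOn (fun s => 1 / log s) (Set.Ioi 1) :=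
  continuousOn_const.div (continuousOn_log.mono fun _ hs => (zero_lt_one.trans hs).ne')
    fun _ hs => (log_pos hs).ne'

lemma continuousOn_inv_div_log : ContinuousOn (fun s => s⁻¹ / log s) (Set.Ioi 1) :=
  (continuousOn_inv₀.mono fun _ hs => (zero_lt_one.trans hs).ne').div
    (continuousOn_log.mono fun _ hs => (zero_lt_one.trans hs).ne') fun _ hs => (log_pos hs).ne'

lemma intervalIntegrable_one_div_log_s11 {a b : ℝ} (ha : 1 < a) (hb : 1 < b) :
    IntervalIntegrable (fun s => 1 / log s) MeasureTheory.volume a b :=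
  (continuousOn_one_div_log_s11.mono (Set.uIcc_subset_Ioi ha hb)).intervalIntegrable

lemma intervalIntegrable_inv_div_log {a b : ℝ} (ha : 1 < a) (hb : 1 < b) :
    IntervalIntegrable (fun s => s⁻¹ / log s) MeasureTheory.volume a b :=
  (continuousOn_inv_div_log.mono (Set.uIcc_subset_Ioi ha hb)).intervalIntegrable

lemma li_sub_li {a b : ℝ} (ha : 1 < a) (hb : 1 < b) :
    li b - li a = ∫ s in a..b, 1 / log s :=
  intervalIntegral.integral_interval_sub_left
    (intervalIntegrable_one_div_log_s11 one_lt_two hb) (intervalIntegrable_one_div_log_s11 one_lt_two ha)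

lemma li_strictMonoOn : StrictMonoOn li (Set.Ioi 1) := by
  intro a ha b hb hab
  rw [← sub_pos, li_sub_li ha hb]
  exact intervalIntegral.intervalIntegral_pos_of_pos_on (intervalIntegrable_one_div_log_s11 ha hb)
    (fun s hs => one_div_pos.2 (log_pos (ha.out.trans hs.1))) hab

lemma log_log_sub_log_log {a b : ℝ} (ha : 1 < a) (hb : 1 < b) :
    log (log b) - log (log a) = ∫ s in a..b, s⁻¹ / log s := by
  have hderiv : ∀ s ∈ Set.Ioi (1 : ℝ), HasDerivAt (fun s => log (log s)) (s⁻¹ / log s) s :=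
    fun s hs => (hasDerivAt_log (zero_lt_one.trans hs).ne').log (log_pos hs).ne'
  exact (intervalIntegral.integral_eq_sub_of_hasDerivAt
    (fun s hs => hderiv s (Set.uIcc_subset_Ioi ha hb hs))
    (intervalIntegrable_inv_div_log ha hb)).symm

lemma log_log_sub_log_log_le {a b : ℝ} (ha : 1 < a) (hab : a ≤ b) :
    log (log b) - log (log a) ≤ (li b - li a) / a := by
  have hb : 1 < b := ha.trans_le hab
  rw [log_log_sub_log_log ha hb, li_sub_li ha hb, div_eq_inv_mul,
    ← intervalIntegral.integral_const_mul]
  refine intervalIntegral.integral_mono_on hab (intervalIntegrable_inv_div_log ha hb)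
    ((intervalIntegrable_one_div_log_s11 ha hb).const_mul _) fun s hs => ?_
  rw [mul_one_div]
  exact div_le_div_of_nonneg_right (inv_anti₀ (zero_lt_one.trans ha) hs.1)
    (log_pos (ha.trans_le hs.1)).le

lemma log_log_sub_log_log_le_of_li_sub_li_eq {a b C : ℝ} (hC : 0 < C) (ha : 1 < a) (hb : 1 < b)
    (h : li b - li a = C) : log (log b) - log (log a) ≤ C / a :=
  h ▸ log_log_sub_log_log_le ha ((li_strictMonoOn.le_iff_le ha hb).1 (by linarith))

lemma Finset.prod_one_sub_le_exp_neg_sum {ι : Type*} (s : Finset ι) {f : ι → ℝ}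
    (hf : ∀ i ∈ s, f i ≤ 1) : ∏ i ∈ s, (1 - f i) ≤ exp (-∑ i ∈ s, f i) := by
  rw [← sum_neg_distrib, exp_sum]
  exact prod_le_prod (fun i hi => sub_nonneg.2 (hf i hi)) fun i _ => by
    linarith [add_one_le_exp (-f i)]

lemma Finset.sub_le_sum_Ico_of_succ_sub_le {M : Type*} [AddCommGroup M] [PartialOrder M]
    [IsOrderedAddMonoid M] {f g : ℕ → M} {m n : ℕ} (hmn : m ≤ n)
    (h : ∀ k ∈ Ico m n, f (k + 1) - f k ≤ g k) : f n - f m ≤ ∑ k ∈ Ico m n, g k :=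
  sum_Ico_sub f hmn ▸ sum_le_sum h

theorem product_decay_estimate_general
    (C D : ℝ) (hC : 0 < C) (N : ℕ) (hN : 1 ≤ N)
    (x : ℝ → ℝ)
    (hxe : ∀ t ∈ Set.Icc (0:ℝ) (N:ℝ), Real.exp 1 ≤ x t)
    (hli : ∀ t ∈ Set.Icc (0:ℝ) (N:ℝ), li (x t) = C * t + D) :
    ∏ k ∈ Finset.Icc 1 N, (1 - 1 / x (k : ℝ)) ≤
      (Real.log (x 1) / Real.log (x N)) ^ ((1:ℝ) / C) := by
  have hmem : ∀ k ≤ N, (k : ℝ) ∈ Set.Icc (0 : ℝ) N := fun k hk =>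
    ⟨k.cast_nonneg, Nat.cast_le.2 hk⟩
  have hx : ∀ k ≤ N, 1 < x k := fun k hk =>
    (one_lt_exp_iff.2 one_pos).trans_le (hxe k (hmem k hk))
  have hstep : ∀ k ∈ Ico 1 N, log (log (x ↑(k + 1))) - log (log (x k)) ≤ C * (1 / x k) := by
    intro k hk
    have hkN : k + 1 ≤ N := (mem_Ico.1 hk).2
    rw [mul_one_div]
    refine log_log_sub_log_log_le_of_li_sub_li_eq hC (hx k (by omega)) (hx _ hkN) ?_
    rw [hli _ (hmem _ hkN), hli _ (hmem k (by omega))]; push_cast; ring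
  have hsum : (log (log (x N)) - log (log (x 1))) / C ≤ ∑ k ∈ Icc 1 N, 1 / x k := by
    rw [div_le_iff₀' hC, mul_sum]
    calc log (log (x N)) - log (log (x 1)) ≤ ∑ k ∈ Ico 1 N, C * (1 / x k) := by
          simpa using sub_le_sum_Ico_of_succ_sub_le (f := fun k : ℕ => log (log (x k))) hN hstep
      _ ≤ ∑ k ∈ Icc 1 N, C * (1 / x k) :=
          sum_le_sum_of_subset_of_nonneg Ico_subset_Icc_self fun k hk _ =>
            mul_nonneg hC.le (one_div_nonneg.2 (zero_le_one.trans (hx k (mem_Icc.1 hk).2).le))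
  have hlog1 : 0 < log (x 1) := log_pos (by simpa using hx 1 hN)
  have hlogN : 0 < log (x N) := log_pos (hx N le_rfl)
  calc ∏ k ∈ Icc 1 N, (1 - 1 / x k) ≤ exp (-∑ k ∈ Icc 1 N, 1 / x k) :=
        prod_one_sub_le_exp_neg_sum _ fun k hk =>
          (div_le_one (zero_lt_one.trans (hx k (mem_Icc.1 hk).2))).2 (hx k (mem_Icc.1 hk).2).le
    _ ≤ exp (-((log (log (x N)) - log (log (x 1))) / C)) := by gcongr
    _ = (log (x 1) / log (x N)) ^ (1 / C) := by
        rw [rpow_def_of_pos (div_pos hlog1 hlogN), log_div hlog1.ne' hlogN.ne']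
        ring_nf

/-- Decay of the product `∏ (1 − 1/li⁻¹(C k + D))`: if `x = li⁻¹ ∘ (C · + D)`
on `[0, N]` with `x ≥ e`, then
`∏_{k=1}^N (1 − 1/x(k)) ≤ (log x(1) / log x(N))^{1/C}`. -/
theorem product_decay_estimate
    (C D : ℝ) (hC : 0 < C) (N : ℕ) (hN : 1 ≤ N)
    (x : ℝ → ℝ) (hx : ContinuousOn x (Set.Icc (0:ℝ) N))
    (hxe : ∀ t ∈ Set.Icc (0:ℝ) (N:ℝ), Real.exp 1 ≤ x t)
    (hli : ∀ t ∈ Set.Icc (0:ℝ) (N:ℝ), li (x t) = C * t + D) :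
    ∏ k ∈ Finset.Icc 1 N, (1 - 1 / x (k : ℝ)) ≤
      (Real.log (x 1) / Real.log (x N)) ^ ((1:ℝ) / C) :=
  product_decay_estimate_general C D hC N hN x hxe hli
end
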